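/- arXiv:1101.0565 — 4 statements merged into one kernel-verified Lean document; each statement's English description precedes it below -/
import Mathlib

section
/- Let Q ⊆ ℝ² be a range and let S ⊂ ℝ² be a finite set of points. For every homothet Q' of Q that contains at least two points of S, there exists a homothet Q'' of Q with Q'' ⊆ Q' such that Q'' contains at least two points of S on its topological boundary and contains no point of S in its topological interior. -/
/-- A range: a compact convex subset of the plane with nonempty interior
containing the origin. -/
def IsRange (Q : Set (ℝ × ℝ)) : Prop :=
  IsCompact Q ∧ Convex ℝ Q ∧ (interior Q).Nonempty ∧ (0 : ℝ × ℝ) ∈ Q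

/-- The homothet `Q(t, l) = {l • x + t : x ∈ Q}`. -/
def homothet (Q : Set (ℝ × ℝ)) (t : ℝ × ℝ) (l : ℝ) : Set (ℝ × ℝ) :=
  (fun x => l • x + t) '' Q

/-!
Among all homothets `Q(t', l') ⊆ Q(t, l)` with `0 ≤ l' ≤ l` containing two points of `S`,
which form a compact set of parameters `(t', l')`, take one of minimal scale `l₀`; it is
nondegenerate because a homothet of scale `0` is a single point. If some `r ∈ S` were
interior to it, shrinking it towards another of its points `s ∈ S` by a factor `μ < 1`
close enough to `1` would keep it inside the old homothet (by convexity) and still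
containing `r` and `s`, contradicting minimality. So no point of `S` is interior, and the
two points it contains lie on its boundary.
-/

open Topology

section Homothet

variable {Q : Set (ℝ × ℝ)}

theorem image_homothet (Q : Set (ℝ × ℝ)) (t c : ℝ × ℝ) (l μ : ℝ) :
    (fun x => μ • x + c) '' homothet Q t l = homothet Q (μ • t + c) (μ * l) := by
  simp only [homothet, Set.image_image]
  congr 1
  funext x
  module

theorem subsingleton_homothet_zero (Q : Set (ℝ × ℝ)) (t : ℝ × ℝ) :
    (homothet Q t 0).Subsingleton := by
  rintro _ ⟨x, -, rfl⟩ _ ⟨y, -, rfl⟩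
  simp

theorem isCompact_homothet (hQ : IsCompact Q) (t : ℝ × ℝ) (l : ℝ) :
    IsCompact (homothet Q t l) :=
  hQ.image (by fun_prop)

theorem homothet_shrink_subset (hQ : Convex ℝ Q) {t s : ℝ × ℝ} {l μ : ℝ}
    (hs : s ∈ homothet Q t l) (hμ₀ : 0 ≤ μ) (hμ₁ : μ ≤ 1) :
    homothet Q (μ • t + (1 - μ) • s) (μ * l) ⊆ homothet Q t l := by
  rw [← image_homothet]
  rintro _ ⟨z, hz, rfl⟩
  obtain ⟨x, hx, rfl⟩ := hz
  obtain ⟨y, hy, rfl⟩ := hs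
  refine ⟨μ • x + (1 - μ) • y, hQ hx hy hμ₀ (by linarith) (by ring), ?_⟩
  module

/-- Shrinking towards any center `s` by a factor close enough to `1` keeps an interior
point `r`, since `r = μ • (s + μ⁻¹ • (r - s)) + (1 - μ) • s`. -/
theorem exists_shrink_mem_of_mem_interior {t s r : ℝ × ℝ} {l : ℝ}
    (hr : r ∈ interior (homothet Q t l)) :
    ∃ μ ∈ Set.Ioo (0 : ℝ) 1, r ∈ homothet Q (μ • t + (1 - μ) • s) (μ * l) := by
  set g : ℝ → ℝ × ℝ := fun μ => s + μ⁻¹ • (r - s)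
  have hg : ContinuousAt g 1 := by
    fun_prop (disch := norm_num)
  have hg_int : ∀ᶠ μ in 𝓝[<] (1 : ℝ), g μ ∈ interior (homothet Q t l) :=
    eventually_nhdsWithin_of_eventually_nhds <|
      hg.eventually_mem (isOpen_interior.mem_nhds (by simpa [g] using hr))
  have hpos : ∀ᶠ μ in 𝓝[<] (1 : ℝ), 0 < μ :=
    eventually_nhdsWithin_of_eventually_nhds (eventually_gt_nhds one_pos)
  obtain ⟨μ, hμ_int, hμ₀, hμ₁⟩ := (hg_int.and (hpos.and self_mem_nhdsWithin)).exists
  refine ⟨μ, ⟨hμ₀, hμ₁⟩, ?_⟩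
  rw [← image_homothet]
  refine ⟨g μ, interior_subset hμ_int, ?_⟩
  simp only [g, smul_add, smul_smul, mul_inv_cancel₀ hμ₀.ne', one_smul]
  module

end Homothet

section Candidates

def shrinkCandidates (Q : Set (ℝ × ℝ)) (S : Finset (ℝ × ℝ)) (H : Set (ℝ × ℝ)) (L : ℝ) :
    Set ((ℝ × ℝ) × ℝ) :=
  {y | y.2 ∈ Set.Icc 0 L ∧ homothet Q y.1 y.2 ⊆ H ∧
    ∃ p ∈ S, ∃ q ∈ S, p ≠ q ∧ p ∈ homothet Q y.1 y.2 ∧ q ∈ homothet Q y.1 y.2}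

variable {Q : Set (ℝ × ℝ)} {S : Finset (ℝ × ℝ)} {H : Set (ℝ × ℝ)} {L : ℝ}

theorem isCompact_setOf_mem_homothet (hQ : IsCompact Q) (p : ℝ × ℝ) (L : ℝ) :
    IsCompact {y : (ℝ × ℝ) × ℝ | y.2 ∈ Set.Icc 0 L ∧ p ∈ homothet Q y.1 y.2} := by
  convert (hQ.prod (isCompact_Icc (a := 0) (b := L))).image
    (f := fun z : (ℝ × ℝ) × ℝ => (p - z.2 • z.1, z.2)) (by fun_prop) using 1
  ext ⟨t', l'⟩
  constructor
  · rintro ⟨hl', x, hx, rfl⟩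
    exact ⟨(x, l'), ⟨hx, hl'⟩, by simp⟩
  · rintro ⟨⟨x, l''⟩, ⟨hx, hl''⟩, h⟩
    obtain ⟨rfl, rfl⟩ := Prod.mk.inj h
    exact ⟨hl'', x, hx, by simp⟩

theorem isClosed_setOf_homothet_subset (hH : IsClosed H) :
    IsClosed {y : (ℝ × ℝ) × ℝ | homothet Q y.1 y.2 ⊆ H} := by
  have : {y : (ℝ × ℝ) × ℝ | homothet Q y.1 y.2 ⊆ H} =
      ⋂ x ∈ Q, {y : (ℝ × ℝ) × ℝ | y.2 • x + y.1 ∈ H} := by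
    ext y
    simp only [homothet, Set.image_subset_iff, Set.mem_iInter]
    rfl
  rw [this]
  exact isClosed_biInter fun x _ => hH.preimage (by fun_prop)

theorem isCompact_shrinkCandidates (hQ : IsCompact Q) (hH : IsClosed H) :
    IsCompact (shrinkCandidates Q S H L) := by
  have : shrinkCandidates Q S H L = ⋃ p ∈ (S : Set (ℝ × ℝ)), ⋃ q ∈ (S : Set (ℝ × ℝ)) \ {p},
      {y | y.2 ∈ Set.Icc 0 L ∧ p ∈ homothet Q y.1 y.2} ∩
        ({y | y.2 ∈ Set.Icc 0 L ∧ q ∈ homothet Q y.1 y.2} ∩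
          {y | homothet Q y.1 y.2 ⊆ H}) := by
    ext y
    simp only [shrinkCandidates, Set.mem_iUnion, Set.mem_inter_iff,
      Set.mem_sdiff, Set.mem_singleton_iff, Finset.mem_coe, exists_prop]
    grind
  rw [this]
  refine S.finite_toSet.isCompact_biUnion fun p _ => ?_
  refine (S.finite_toSet.sdiff).isCompact_biUnion fun q _ => ?_
  exact (isCompact_setOf_mem_homothet hQ p L).inter_right
    ((isCompact_setOf_mem_homothet hQ q L).isClosed.inter (isClosed_setOf_homothet_subset hH))

theorem pos_of_mem_shrinkCandidates {y : (ℝ × ℝ) × ℝ} (hy : y ∈ shrinkCandidates Q S H L) :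
    0 < y.2 := by
  obtain ⟨hl, -, p, -, q, -, hpq, hp, hq⟩ := hy
  refine hl.1.lt_of_ne fun h => hpq ?_
  rw [← h] at hp hq
  exact subsingleton_homothet_zero Q y.1 hp hq

theorem notMem_interior_homothet_of_isMinOn (hQ : Convex ℝ Q) {y : (ℝ × ℝ) × ℝ}
    (hy : y ∈ shrinkCandidates Q S H L) (hmin : IsMinOn Prod.snd (shrinkCandidates Q S H L) y)
    {r : ℝ × ℝ} (hr : r ∈ S) : r ∉ interior (homothet Q y.1 y.2) := by
  intro hr_int
  have hpos := pos_of_mem_shrinkCandidates hy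
  obtain ⟨hl, hsub, p, hp, q, hq, hpq, hpH, hqH⟩ := hy
  obtain ⟨s, hs, hsr, hsH⟩ : ∃ s ∈ S, s ≠ r ∧ s ∈ homothet Q y.1 y.2 := by
    by_cases hpr : p = r
    · exact ⟨q, hq, fun h => hpq (hpr.trans h.symm), hqH⟩
    · exact ⟨p, hp, hpr, hpH⟩
  obtain ⟨μ, ⟨hμ₀, hμ₁⟩, hrμ⟩ := exists_shrink_mem_of_mem_interior (s := s) hr_int
  have hshrink := homothet_shrink_subset hQ hsH hμ₀.le hμ₁.le
  have hsμ : s ∈ homothet Q (μ • y.1 + (1 - μ) • s) (μ * y.2) := by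
    rw [← image_homothet]
    exact ⟨s, hsH, by module⟩
  have hcand : (μ • y.1 + (1 - μ) • s, μ * y.2) ∈ shrinkCandidates Q S H L :=
    ⟨⟨by positivity, by nlinarith [hl.2]⟩, hshrink.trans hsub, r, hr, s, hs, hsr.symm, hrμ, hsμ⟩
  have : y.2 ≤ μ * y.2 := hmin hcand
  nlinarith

end Candidates

/-- Every homothet of `Q` containing at least two points of `S` can be shrunk to a
homothet `Q''` contained in it, having at least two points of `S` on its boundary
and no point of `S` in its interior. -/
theorem shrink_to_boundary (Q : Set (ℝ × ℝ)) (hQ : IsRange Q)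
    (S : Finset (ℝ × ℝ)) (t : ℝ × ℝ) (l : ℝ) (hl : 0 < l)
    (h2 : ∃ p ∈ S, ∃ q ∈ S, p ≠ q ∧ p ∈ homothet Q t l ∧ q ∈ homothet Q t l) :
    ∃ t' : ℝ × ℝ, ∃ l' : ℝ, 0 < l' ∧
      homothet Q t' l' ⊆ homothet Q t l ∧
      (∃ p ∈ S, ∃ q ∈ S, p ≠ q ∧
        p ∈ frontier (homothet Q t' l') ∧ q ∈ frontier (homothet Q t' l')) ∧
      ∀ p ∈ S, p ∉ interior (homothet Q t' l') := by
  obtain ⟨hQc, hQconv, -, -⟩ := hQ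
  have hstart : (t, l) ∈ shrinkCandidates Q S (homothet Q t l) l :=
    ⟨⟨hl.le, le_rfl⟩, subset_rfl, h2⟩
  obtain ⟨y, hy, hmin⟩ :=
    (isCompact_shrinkCandidates hQc (isCompact_homothet hQc t l).isClosed).exists_isMinOn
      ⟨_, hstart⟩ continuous_snd.continuousOn
  have hint := fun r (hr : r ∈ S) => notMem_interior_homothet_of_isMinOn hQconv hy hmin hr
  have hfrontier := (isCompact_homothet hQc y.1 y.2).isClosed.frontier_eq
  have hpos := pos_of_mem_shrinkCandidates hy
  obtain ⟨-, hsub, p, hp, q, hq, hpq, hpH, hqH⟩ := hy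
  refine ⟨y.1, y.2, hpos, hsub,
    ⟨p, hp, q, hq, hpq, ?_, ?_⟩, hint⟩ <;> rw [hfrontier]
  exacts [⟨hpH, hint p hp⟩, ⟨hqH, hint q hq⟩]
end

section
/- Let S ⊂ ℝ³ be a finite set of n ≥ 3 points such that no two points of S share an x-, y-, or z-coordinate, and let 2 ≤ k ≤ n. Define the graph G_k(S) on vertex set S whose edges are the pairs {u,v} of distinct points of S for which there exists q ∈ ℝ³ with u ∈ e(q), v ∈ e(q), and |e(q)| ≤ k. Then G_k(S) has at most 3(k−1)n − 6 edges. -/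
open scoped Classical

/-- `q` dominates `u`: every coordinate of `u` is at most the corresponding
coordinate of `q`. -/
def Dominates (q u : ℝ × ℝ × ℝ) : Prop :=
  u.1 ≤ q.1 ∧ u.2.1 ≤ q.2.1 ∧ u.2.2 ≤ q.2.2

/-!
Charge each edge `{u, v}` of `G_k(S)` to the endpoint that lies above the other one in at least
two coordinates (by general position exactly one does). The points charged to `u` fall into four
families: those below `u` in all three coordinates, and, for each coordinate `h`, those below `u`
in the other two coordinates `f, g` and above `u` in `h`. For such a `v` every witness `q` of the
edge dominates the box `{f ≤ f u, g ≤ g u, h ≤ h v}`; choosing `v` highest in `h`, this box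
contains `e(u)` and the whole family, which are disjoint, so `|e(u)| + |family| ≤ k`. Hence each
family has at most `k - 1` points, so does the first family together with one mixed family, and
every point is charged at most `3(k - 1)`.

It remains to find three points of total charge at most `3(k - 1)`. A point minimal in one
coordinate is charged at most `k - 1`, which settles the case of three distinct coordinate
minima. If `u` is minimal in both `f` and `g`, it is charged nothing, the point `c` minimal in `h`
among the others at most `k - 1`, and the next point `x` in `h` at most `2(k - 1)`: of the two
families of `x` lying above `x` in `f` or in `g`, one is empty, since every member of either is
`c`, which lies above `x` in `f` for the first family and below it for the second.
-/

open Finset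

noncomputable section

theorem Finset.exists_card_eq_three_sum_le {ι : Type*} {s : Finset ι} {φ : ι → ℕ} {m : ℕ}
    {a b c : ι} (ha : a ∈ s) (hb : b ∈ s) (hc : c ∈ s)
    (hab : a ≠ b) (hac : a ≠ c) (hbc : b ≠ c) (hm : φ a + φ b + φ c ≤ m) :
    ∃ t ⊆ s, #t = 3 ∧ ∑ x ∈ t, φ x ≤ m := by
  refine ⟨{a, b, c}, by simp [insert_subset_iff, *],
    card_eq_three.2 ⟨a, b, c, hab, hac, hbc, rfl⟩, ?_⟩
  rwa [sum_insert (by simp [hab, hac]), sum_insert (by simp [hbc]), sum_singleton, ← add_assoc]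

namespace DominanceGraph

variable {α : Type*} [Preorder α]

-- The three coordinates are abstracted so that every lemma applies to each cyclic rotation.
def IsCoords (f g h : α → ℝ) : Prop :=
  ∀ a b : α, a ≤ b ↔ f a ≤ f b ∧ g a ≤ g b ∧ h a ≤ h b

theorem IsCoords.rotate {f g h : α → ℝ} (hc : IsCoords f g h) : IsCoords g h f :=
  fun a b => (hc a b).trans and_rotate

variable (S : Finset α) (k : ℕ)

def edges : Finset (Finset α) :=
  {e ∈ S.powerset | #e = 2 ∧ ∃ q, (∀ u ∈ e, u ≤ q) ∧ #{w ∈ S | w ≤ q} ≤ k}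

def Adj (u v : α) : Prop :=
  ∃ q, u ≤ q ∧ v ≤ q ∧ #{w ∈ S | w ≤ q} ≤ k

variable (f g h : α → ℝ)

def lowerNbrs (u : α) : Finset α :=
  {v ∈ S | f v < f u ∧ g v < g u ∧ h v < h u ∧ Adj S k u v}

def mixedNbrs (u : α) : Finset α :=
  {v ∈ S | f v < f u ∧ g v < g u ∧ h u < h v ∧ Adj S k u v}

def chargeSet (u : α) : Finset α :=
  lowerNbrs S k f g h u ∪ mixedNbrs S k f g h u ∪ mixedNbrs S k g h f u ∪
    mixedNbrs S k h f g u

def charge (u : α) : ℕ :=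
  #(lowerNbrs S k f g h u) + #(mixedNbrs S k f g h u) + #(mixedNbrs S k g h f u) +
    #(mixedNbrs S k h f g u)

variable {S k f g h}

theorem Adj.symm {u v : α} (huv : Adj S k u v) : Adj S k v u :=
  let ⟨q, huq, hvq, hq⟩ := huv
  ⟨q, hvq, huq, hq⟩

theorem card_le_of_adj {u v : α} (huv : Adj S k u v) : #{w ∈ S | w ≤ u} ≤ k :=
  let ⟨_, huq, _, hq⟩ := huv
  (card_le_card (monotone_filter_right S fun _ _ hw => hw.trans huq)).trans hq

theorem mem_chargeSet_or_mem_chargeSet {u v : α} (hu : u ∈ S) (hv : v ∈ S) (huv : Adj S k u v)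
    (hf : f u ≠ f v) (hg : g u ≠ g v) (hh : h u ≠ h v) :
    v ∈ chargeSet S k f g h u ∨ u ∈ chargeSet S k f g h v := by
  simp only [chargeSet, lowerNbrs, mixedNbrs, mem_union, mem_filter]
  rcases hf.lt_or_gt with hf | hf <;> rcases hg.lt_or_gt with hg | hg <;>
    rcases hh.lt_or_gt with hh | hh <;> simp [*, huv.symm, hf.not_gt, hg.not_gt, hh.not_gt]

theorem card_chargeSet_le (u : α) : #(chargeSet S k f g h u) ≤ charge S k f g h u :=
  (card_union_le _ _).trans <| Nat.add_le_add_right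
    ((card_union_le _ _).trans <| Nat.add_le_add_right (card_union_le _ _) _) _

theorem card_edges_le_sum_charge
    (hgen : ∀ u ∈ S, ∀ v ∈ S, u ≠ v → f u ≠ f v ∧ g u ≠ g v ∧ h u ≠ h v) :
    #(edges S k) ≤ ∑ u ∈ S, charge S k f g h u := by
  refine le_trans ?_ (sum_le_sum fun u _ => card_chargeSet_le u)
  rw [← card_sigma]
  refine card_le_card_of_surjOn (fun p => {p.1, p.2}) fun e he => ?_
  obtain ⟨heS, he2, q, heq, hq⟩ := mem_filter.1 he
  obtain ⟨u, v, huv, rfl⟩ := card_eq_two.1 he2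
  have hu : u ∈ S := mem_powerset.1 heS (mem_insert_self u {v})
  have hv : v ∈ S := mem_powerset.1 heS (mem_insert_of_mem (mem_singleton_self v))
  have hadj : Adj S k u v := ⟨q, heq u (by simp), heq v (by simp), hq⟩
  obtain ⟨hf, hg, hh⟩ := hgen u hu v hv huv
  rcases mem_chargeSet_or_mem_chargeSet hu hv hadj hf hg hh with h | h
  · exact ⟨⟨u, v⟩, mem_sigma.2 ⟨hu, h⟩, rfl⟩
  · exact ⟨⟨v, u⟩, mem_sigma.2 ⟨hv, h⟩, pair_comm v u⟩

theorem card_lowerNbrs_lt (hc : IsCoords f g h) {u : α} (hu : u ∈ S) :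
    #(lowerNbrs S k f g h u) < #{w ∈ S | w ≤ u} := by
  refine card_lt_card ⟨fun v hv => ?_, fun hsub => ?_⟩
  · obtain ⟨hvS, hfv, hgv, hhv, -⟩ := mem_filter.1 hv
    exact mem_filter.2 ⟨hvS, (hc v u).2 ⟨hfv.le, hgv.le, hhv.le⟩⟩
  · exact lt_irrefl _ (mem_filter.1 (hsub (mem_filter.2 ⟨hu, le_rfl⟩))).2.1

theorem card_le_of_lowerNbrs_nonempty {u : α} (hne : (lowerNbrs S k f g h u).Nonempty) :
    #{w ∈ S | w ≤ u} ≤ k :=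
  let ⟨_, hv⟩ := hne
  card_le_of_adj (mem_filter.1 hv).2.2.2.2

theorem card_add_card_mixedNbrs_le (hc : IsCoords f g h) {u : α}
    (hne : (mixedNbrs S k f g h u).Nonempty) :
    #{w ∈ S | w ≤ u} + #(mixedNbrs S k f g h u) ≤ k := by
  obtain ⟨v, hv, hvmax⟩ := exists_max_image _ h hne
  obtain ⟨-, -, -, huv, q, huq, hvq, hq⟩ := mem_filter.1 hv
  have hfq := ((hc u q).1 huq).1
  have hgq := ((hc u q).1 huq).2.1
  have hhq := ((hc v q).1 hvq).2.2
  have hdisj : Disjoint {w ∈ S | w ≤ u} (mixedNbrs S k f g h u) :=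
    disjoint_left.2 fun w hw hw' =>
      (mem_filter.1 hw').2.2.2.1.not_ge ((hc w u).1 (mem_filter.1 hw).2).2.2
  have hsub : {w ∈ S | w ≤ u} ∪ mixedNbrs S k f g h u ⊆ {w ∈ S | w ≤ q} := by
    refine union_subset (monotone_filter_right S fun _ _ hw => hw.trans huq) fun w hw => ?_
    obtain ⟨hwS, hfw, hgw, -⟩ := mem_filter.1 hw
    exact mem_filter.2
      ⟨hwS, (hc w q).2 ⟨hfw.le.trans hfq, hgw.le.trans hgq, (hvmax w hw).trans hhq⟩⟩
  rw [← card_union_of_disjoint hdisj]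
  exact (card_le_card hsub).trans hq

theorem card_mixedNbrs_lt (hc : IsCoords f g h) {u : α} (hu : u ∈ S) (hk : 0 < k) :
    #(mixedNbrs S k f g h u) < k := by
  rcases (mixedNbrs S k f g h u).eq_empty_or_nonempty with hempty | hne
  · simpa [hempty] using hk
  · have := card_add_card_mixedNbrs_le hc hne
    have : 0 < #{w ∈ S | w ≤ u} := card_pos.2 ⟨u, mem_filter.2 ⟨hu, le_rfl⟩⟩
    omega

theorem card_lowerNbrs_add_card_mixedNbrs_lt (hc : IsCoords f g h) {u : α} (hu : u ∈ S)
    (hk : 0 < k) : #(lowerNbrs S k f g h u) + #(mixedNbrs S k f g h u) < k := by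
  have hlow := card_lowerNbrs_lt (k := k) hc hu
  rcases (mixedNbrs S k f g h u).eq_empty_or_nonempty with hempty | hne
  · rcases (lowerNbrs S k f g h u).eq_empty_or_nonempty with hempty' | hne'
    · simpa [hempty, hempty'] using hk
    · have := card_le_of_lowerNbrs_nonempty hne'
      simp only [hempty, card_empty]
      omega
  · have := card_add_card_mixedNbrs_le hc hne
    omega

theorem charge_rotate : charge S k g h f = charge S k f g h := by
  ext u
  have : lowerNbrs S k g h f u = lowerNbrs S k f g h u :=
    filter_congr fun _ _ => by tauto
  simp only [charge, this]
  ring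

theorem charge_le (hc : IsCoords f g h) {u : α} (hu : u ∈ S) (hk : 0 < k) :
    charge S k f g h u ≤ 3 * (k - 1) := by
  have h₁ := card_lowerNbrs_add_card_mixedNbrs_lt hc hu hk
  have h₂ := card_mixedNbrs_lt hc.rotate hu hk
  have h₃ := card_mixedNbrs_lt hc.rotate.rotate hu hk
  unfold charge
  omega

theorem mixedNbrs_comm : mixedNbrs S k g f h = mixedNbrs S k f g h := by
  ext u v
  simp only [mixedNbrs, mem_filter]
  tauto

theorem lowerNbrs_eq_empty {u : α} (hf : IsMinOn f S u) : lowerNbrs S k f g h u = ∅ :=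
  filter_eq_empty_iff.2 fun v hv hlt => (isMinOn_iff.1 hf v hv).not_gt hlt.1

theorem mixedNbrs_eq_empty {s : Finset α} {u : α} (hf : IsMinOn f s u)
    (hs : mixedNbrs S k f g h u ⊆ s) : mixedNbrs S k f g h u = ∅ :=
  eq_empty_of_forall_notMem fun v hv =>
    (isMinOn_iff.1 hf v (hs hv)).not_gt (mem_filter.1 hv).2.1

theorem mixedNbrs_subset_erase {u x : α} (hh : IsMinOn h S u) (hx : x ∈ S) :
    mixedNbrs S k f g h x ⊆ S.erase u := fun v hv => by
  obtain ⟨hvS, -, -, hlt, -⟩ := mem_filter.1 hv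
  exact mem_erase.2 ⟨fun hvu => (hvu ▸ hlt).not_ge (isMinOn_iff.1 hh x hx), hvS⟩

theorem charge_eq_zero {u : α} (hf : IsMinOn f S u) (hg : IsMinOn g S u) :
    charge S k f g h u = 0 := by
  rw [charge, lowerNbrs_eq_empty hf, mixedNbrs_eq_empty hf (filter_subset _ _),
    mixedNbrs_eq_empty hg (filter_subset _ _), mixedNbrs_comm (f := f) (g := h),
    mixedNbrs_eq_empty hf (filter_subset _ _)]
  rfl

theorem charge_le_of_isMinOn (hc : IsCoords f g h) {u : α} (hu : u ∈ S) (hk : 0 < k)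
    (hf : IsMinOn f S u) : charge S k f g h u ≤ k - 1 := by
  have := card_mixedNbrs_lt (k := k) hc.rotate hu hk
  rw [charge, lowerNbrs_eq_empty hf, mixedNbrs_eq_empty hf (filter_subset _ _),
    mixedNbrs_comm (f := f) (g := h), mixedNbrs_eq_empty hf (filter_subset _ _)]
  simp only [card_empty]
  omega

theorem charge_le_of_isMinOn_erase (hc : IsCoords f g h) {u x : α} (hx : x ∈ S) (hk : 0 < k)
    (hf : IsMinOn f S u) (hg : IsMinOn g S u) (hh : IsMinOn h (S.erase u) x) :
    charge S k f g h x ≤ k - 1 := by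
  have h₁ := card_lowerNbrs_add_card_mixedNbrs_lt hc hx hk
  rw [charge, mixedNbrs_comm (f := h) (g := g),
    mixedNbrs_eq_empty hh (mixedNbrs_subset_erase hf hx),
    mixedNbrs_eq_empty hh (mixedNbrs_subset_erase hg hx)]
  simp only [card_empty]
  omega

theorem charge_le_of_isMinOn_erase_erase (hc : IsCoords f g h) {u c x : α} (hx : x ∈ S)
    (hk : 0 < k) (hf : IsMinOn f S u) (hg : IsMinOn g S u)
    (hh : IsMinOn h ((S.erase u).erase c) x) : charge S k f g h x ≤ 2 * (k - 1) := by
  have eq_c : ∀ v ∈ S.erase u, h v < h x → v = c := fun v hv hlt =>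
    by_contra fun hvc => (isMinOn_iff.1 hh v (mem_erase.2 ⟨hvc, hv⟩)).not_gt hlt
  have hempty : mixedNbrs S k g h f x = ∅ ∨ mixedNbrs S k h f g x = ∅ := by
    refine or_iff_not_imp_left.2 fun hne => eq_empty_of_forall_notMem fun v₂ hv₂ => hne ?_
    refine eq_empty_of_forall_notMem fun v₁ hv₁ => ?_
    obtain ⟨-, -, -, hfx, -⟩ := mem_filter.1 hv₁
    obtain ⟨-, -, hfx', -, -⟩ := mem_filter.1 hv₂
    rw [eq_c v₁ (mixedNbrs_subset_erase hf hx hv₁) (mem_filter.1 hv₁).2.2.1] at hfx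
    rw [eq_c v₂ (mixedNbrs_subset_erase hg hx hv₂) (mem_filter.1 hv₂).2.1] at hfx'
    exact hfx.not_gt hfx'
  have h₁ := card_lowerNbrs_add_card_mixedNbrs_lt hc hx hk
  have h₂ := card_mixedNbrs_lt hc.rotate hx hk
  have h₃ := card_mixedNbrs_lt hc.rotate.rotate hx hk
  unfold charge
  rcases hempty with h₀ | h₀ <;> rw [h₀, card_empty] <;> omega

theorem exists_three_charge_le_of_isMinOn (hc : IsCoords f g h) (hk : 0 < k) (hS : 3 ≤ #S)
    {u : α} (hu : u ∈ S) (hf : IsMinOn f S u) (hg : IsMinOn g S u) :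
    ∃ t ⊆ S, #t = 3 ∧ ∑ x ∈ t, charge S k f g h x ≤ 3 * (k - 1) := by
  obtain ⟨c, hc', hcmin⟩ := exists_min_image (S.erase u) h
    (card_pos.1 (by rw [card_erase_of_mem hu]; omega))
  obtain ⟨x, hx', hxmin⟩ := exists_min_image ((S.erase u).erase c) h
    (card_pos.1 (by rw [card_erase_of_mem hc', card_erase_of_mem hu]; omega))
  obtain ⟨hcu, hcS⟩ := mem_erase.1 hc'
  obtain ⟨hxc, hx''⟩ := mem_erase.1 hx'
  obtain ⟨hxu, hxS⟩ := mem_erase.1 hx''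
  have hu₀ := charge_eq_zero (k := k) (h := h) hf hg
  have hc₀ := charge_le_of_isMinOn_erase hc hcS hk hf hg (isMinOn_iff.2 hcmin)
  have hx₀ := charge_le_of_isMinOn_erase_erase hc hxS hk hf hg (isMinOn_iff.2 hxmin)
  exact exists_card_eq_three_sum_le hu hcS hxS hcu.symm hxu.symm hxc.symm (by omega)

theorem exists_three_charge_le (hc : IsCoords f g h) (hk : 0 < k) (hS : 3 ≤ #S) :
    ∃ t ⊆ S, #t = 3 ∧ ∑ x ∈ t, charge S k f g h x ≤ 3 * (k - 1) := by
  have hne : S.Nonempty := card_pos.1 (by omega)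
  obtain ⟨a, ha, hfa⟩ := exists_min_image S f hne
  obtain ⟨b, hb, hgb⟩ := exists_min_image S g hne
  obtain ⟨c, hc', hhc⟩ := exists_min_image S h hne
  replace hfa : IsMinOn f S a := isMinOn_iff.2 hfa
  replace hgb : IsMinOn g S b := isMinOn_iff.2 hgb
  replace hhc : IsMinOn h S c := isMinOn_iff.2 hhc
  by_cases hab : a = b
  · exact exists_three_charge_le_of_isMinOn hc hk hS ha hfa (hab ▸ hgb)
  by_cases hac : a = c
  · simpa only [charge_rotate] using
      exists_three_charge_le_of_isMinOn hc.rotate.rotate hk hS hc' hhc (hac ▸ hfa)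
  by_cases hbc : b = c
  · simpa only [charge_rotate] using
      exists_three_charge_le_of_isMinOn hc.rotate hk hS hb hgb (hbc ▸ hhc)
  have ha₀ := charge_le_of_isMinOn (k := k) hc ha hk hfa
  have hb₀ := charge_le_of_isMinOn (k := k) hc.rotate hb hk hgb
  have hc₀ := charge_le_of_isMinOn (k := k) hc.rotate.rotate hc' hk hhc
  rw [charge_rotate] at hb₀
  rw [charge_rotate, charge_rotate] at hc₀
  exact exists_card_eq_three_sum_le ha hb hc' hab hac hbc (by omega)

theorem sum_charge_add_le (hc : IsCoords f g h) (hk : 0 < k) (hS : 3 ≤ #S) :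
    ∑ u ∈ S, charge S k f g h u + 6 * (k - 1) ≤ 3 * (k - 1) * #S := by
  obtain ⟨t, hts, ht3, ht⟩ := exists_three_charge_le hc hk hS
  have hrest : ∑ u ∈ S \ t, charge S k f g h u ≤ #(S \ t) * (3 * (k - 1)) :=
    sum_le_card_nsmul _ _ _ fun u hu => charge_le hc (mem_sdiff.1 hu).1 hk
  rw [← sum_sdiff hts, ← card_sdiff_add_card_eq_card hts, ht3]
  nlinarith

end DominanceGraph

end

open DominanceGraph

theorem dominates_iff_le {q u : ℝ × ℝ × ℝ} : Dominates q u ↔ u ≤ q := by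
  simp only [Dominates, Prod.le_def]

theorem isCoords_prod : IsCoords (α := ℝ × ℝ × ℝ) Prod.fst (·.2.1) (·.2.2) :=
  fun _ _ => by simp only [Prod.le_def]

theorem Gk_edge_bound_general (S : Finset (ℝ × ℝ × ℝ))
    (hgen : ∀ u ∈ S, ∀ v ∈ S, u ≠ v →
      u.1 ≠ v.1 ∧ u.2.1 ≠ v.2.1 ∧ u.2.2 ≠ v.2.2)
    (hn : 3 ≤ S.card) (k : ℕ) (hk2 : 2 ≤ k) :
    ((S.powerset).filter (fun e =>
        e.card = 2 ∧ ∃ q : ℝ × ℝ × ℝ, (∀ u ∈ e, Dominates q u) ∧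
          (S.filter (fun w => Dominates q w)).card ≤ k)).card
      ≤ 3 * (k - 1) * S.card - 6 := by
  have hcard := card_edges_le_sum_charge (k := k) hgen
  have hsum := sum_charge_add_le isCoords_prod (by omega : 0 < k) hn
  simp only [edges, ← dominates_iff_le] at hcard
  omega

/-- The graph `G_k(S)` has at most `3(k−1)n − 6` edges, where `n = |S| ≥ 3`,
`2 ≤ k ≤ n`, no two points of `S` share a coordinate, and the edges of `G_k(S)`
are the pairs `{u,v}` of distinct points of `S` dominated by some common point
`q ∈ ℝ³` which dominates at most `k` points of `S` in total. -/
theorem Gk_edge_bound (S : Finset (ℝ × ℝ × ℝ))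
    (hgen : ∀ u ∈ S, ∀ v ∈ S, u ≠ v →
      u.1 ≠ v.1 ∧ u.2.1 ≠ v.2.1 ∧ u.2.2 ≠ v.2.2)
    (hn : 3 ≤ S.card) (k : ℕ) (hk2 : 2 ≤ k) (hkn : k ≤ S.card) :
    ((S.powerset).filter (fun e =>
        e.card = 2 ∧ ∃ q : ℝ × ℝ × ℝ, (∀ u ∈ e, Dominates q u) ∧
          (S.filter (fun w => Dominates q w)).card ≤ k)).card
      ≤ 3 * (k - 1) * S.card - 6 :=
  Gk_edge_bound_general S hgen hn k hk2
end

section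
/- Let S ⊂ ℝ³ be a finite set of points and let k ≥ 2. Then there exists a coloring f : S → Fin (6(k−1)) such that for every q ∈ ℝ³, the set e(q) contains at least min(|e(q)|, k) points with mutually distinct colors. (In the paper's notation: c₃(k) ≤ 6(k−1).) -/
/-!
Call distinct points `p, w ∈ S` shallow neighbours when the orthant below `p ⊔ w` contains at
most `k` points of `S`. If every nonempty point set has a point with fewer than `m` shallow
neighbours, greedy colouring with `m` colours works: remove such a point `p`, colour the rest,
and give `p` a colour missing among its neighbours; when `p` lies in a range `e(q)` with at most
`k` points, every other point of `e(q)` is a shallow neighbour of `p`, so its colour is new there.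

In three dimensions such a point exists for `m = 6(k-1)`. Charge each shallow pair `{v, w}` to an
endpoint `v` that the other one exceeds in at most one coordinate; one exists because the two
counts sum to at most `3`. The points charged to `v` either lie below `v`, at most `k - 1` of
them, or exceed `v` in exactly one coordinate `i`; for fixed `i` these and `e(v)` all lie below
`v ⊔ w` for the `w` with the largest `i`-th coordinate, so there are at most `k - |e(v)|` of them.
Hence `v` is charged at most `3(k-1)` pairs, a point with the largest first coordinate at most
`2(k-1)`; so there are fewer than `3(k-1)|S|` shallow pairs, and some point has fewer than
`6(k-1)` shallow neighbours.
-/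

open scoped Classical

namespace Orthant

open Finset

section Greedy

variable {α : Type*} [SemilatticeSup α]

noncomputable def dominated (S : Finset α) (q : α) : Finset α := S.filter (· ≤ q)

@[simp]
lemma mem_dominated {S : Finset α} {q u : α} : u ∈ dominated S q ↔ u ∈ S ∧ u ≤ q :=
  mem_filter

lemma dominated_mono {S : Finset α} {q q' : α} (h : q ≤ q') :
    dominated S q ⊆ dominated S q' :=
  fun _ hu => mem_dominated.2 ⟨(mem_dominated.1 hu).1, (mem_dominated.1 hu).2.trans h⟩

lemma dominated_erase (S : Finset α) (p q : α) :
    dominated (S.erase p) q = (dominated S q).erase p :=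
  filter_erase _ _ _

noncomputable def shallowNeighbors (S : Finset α) (k : ℕ) (p : α) : Finset α :=
  S.filter fun w => w ≠ p ∧ #(dominated S (p ⊔ w)) ≤ k

lemma mem_shallowNeighbors {S : Finset α} {k : ℕ} {p w : α} :
    w ∈ shallowNeighbors S k p ↔ w ∈ S ∧ w ≠ p ∧ #(dominated S (p ⊔ w)) ≤ k :=
  mem_filter

lemma mem_shallowNeighbors_comm {S : Finset α} {k : ℕ} {p w : α} (hp : p ∈ S) (hw : w ∈ S) :
    w ∈ shallowNeighbors S k p ↔ p ∈ shallowNeighbors S k w := by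
  simp only [mem_shallowNeighbors, hp, hw, ne_comm, sup_comm p w]

def IsPolychromatic {β : Type*} [DecidableEq β] (S : Finset α) (k : ℕ) (f : α → β) :
    Prop :=
  ∀ q, min #(dominated S q) k ≤ #((dominated S q).image f)

lemma IsPolychromatic.update {β : Type*} [DecidableEq β] {S : Finset α} {k : ℕ} {f : α → β}
    {p : α} {c : β}
    (hf : IsPolychromatic (S.erase p) k f) (hc : c ∉ (shallowNeighbors S k p).image f) :
    IsPolychromatic S k (Function.update f p c) := by
  intro q
  have hfq := hf q
  rw [dominated_erase] at hfq
  set D := dominated S q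
  by_cases hp : p ∈ D
  · have himage : D.image (Function.update f p c) = insert c ((D.erase p).image f) := by
      conv_lhs => rw [← insert_erase hp]
      rw [image_insert, Function.update_self]
      exact congrArg _ (image_congr fun x hx => Function.update_of_ne (ne_of_mem_erase hx) _ _)
    have hcard := card_erase_of_mem hp
    rw [himage]
    by_cases hD : #D ≤ k
    · have hfresh : c ∉ (D.erase p).image f := by
        refine fun hmem => hc (image_subset_image (fun w hw => ?_) hmem)
        obtain ⟨hwp, hwS, hwq⟩ := by simpa [D] using hw
        exact mem_shallowNeighbors.2 ⟨hwS, hwp,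
          (card_le_card (dominated_mono (sup_le (mem_dominated.1 hp).2 hwq))).trans hD⟩
      rw [card_insert_of_notMem hfresh]
      omega
    · calc min #D k ≤ min #(D.erase p) k := by omega
        _ ≤ _ := hfq
        _ ≤ _ := card_le_card (subset_insert _ _)
  · rw [erase_eq_of_notMem hp] at hfq
    rwa [image_congr fun x hx => Function.update_of_ne (ne_of_mem_of_not_mem hx hp) _ _]

theorem exists_isPolychromatic_of_exists_card_shallowNeighbors_lt {k m : ℕ} (hm : 0 < m)
    (hsparse : ∀ S : Finset α, S.Nonempty → ∃ p ∈ S, #(shallowNeighbors S k p) < m)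
    (S : Finset α) : ∃ f : α → Fin m, IsPolychromatic S k f := by
  induction S using Finset.strongInduction with
  | H S ih =>
  obtain rfl | hS := S.eq_empty_or_nonempty
  · exact ⟨fun _ => ⟨0, hm⟩, fun q => by simp [dominated]⟩
  obtain ⟨p, hp, hdeg⟩ := hsparse S hS
  obtain ⟨f, hf⟩ := ih _ (erase_ssubset hp)
  obtain ⟨c, -, hc⟩ := exists_mem_notMem_of_card_lt_card
    (s := (shallowNeighbors S k p).image f) (t := univ) (by simpa using card_image_le.trans_lt hdeg)
  exact ⟨_, hf.update hc⟩

end Greedy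

section ThreeDim

variable {α : Type*} [LinearOrder α]

def coord (i : Fin 3) (u : α × α × α) : α := ![u.1, u.2.1, u.2.2] i

lemma le_iff_forall_coord {u v : α × α × α} : u ≤ v ↔ ∀ i, coord i u ≤ coord i v := by
  simp [Fin.forall_fin_succ, coord, Prod.le_def]

lemma coord_sup (i : Fin 3) (u v : α × α × α) :
    coord i (u ⊔ v) = coord i u ⊔ coord i v := by
  fin_cases i <;> rfl

def numGreater (w v : α × α × α) : ℕ := #(univ.filter fun i => coord i v < coord i w)

lemma numGreater_add_numGreater_le (w v : α × α × α) :
    numGreater w v + numGreater v w ≤ 3 := by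
  rw [numGreater, numGreater, ← card_union_of_disjoint
    (disjoint_filter.2 fun _ _ h => lt_asymm h)]
  exact (card_le_univ _).trans_eq (Fintype.card_fin 3)

def BeatsOnlyIn (i : Fin 3) (w v : α × α × α) : Prop :=
  coord i v < coord i w ∧ ∀ j ≠ i, coord j w ≤ coord j v

lemma le_or_exists_beatsOnlyIn {w v : α × α × α} (h : numGreater w v ≤ 1) :
    w ≤ v ∨ ∃ i, BeatsOnlyIn i w v := by
  by_cases hle : w ≤ v
  · exact Or.inl hle
  obtain ⟨i, hi⟩ : ∃ i, coord i v < coord i w := by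
    simpa [le_iff_forall_coord] using hle
  refine Or.inr ⟨i, hi, fun j hj => not_lt.1 fun hj' => hj ?_⟩
  exact card_le_one.1 h j (by simpa using hj') i (by simpa using hi)

end ThreeDim

section Charging

variable {α : Type*} [LinearOrder α] (S : Finset (α × α × α)) (k : ℕ)

noncomputable def chargedNeighbors (v : α × α × α) : Finset (α × α × α) :=
  (shallowNeighbors S k v).filter (numGreater · v ≤ 1)

noncomputable def lowerNeighbors (v : α × α × α) : Finset (α × α × α) :=
  (shallowNeighbors S k v).filter (· ≤ v)

noncomputable def neighborsBeatingIn (v : α × α × α) (i : Fin 3) : Finset (α × α × α) :=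
  (shallowNeighbors S k v).filter (BeatsOnlyIn i · v)

variable {S k} {v : α × α × α}

lemma card_chargedNeighbors_le_sum :
    #(chargedNeighbors S k v) ≤
      #(lowerNeighbors S k v) + ∑ i, #(neighborsBeatingIn S k v i) := by
  have hcover : chargedNeighbors S k v ⊆
      lowerNeighbors S k v ∪ univ.biUnion (neighborsBeatingIn S k v) := by
    intro w hw
    simp only [chargedNeighbors, mem_filter] at hw
    rcases le_or_exists_beatsOnlyIn hw.2 with hle | ⟨i, hi⟩
    · exact mem_union_left _ (mem_filter.2 ⟨hw.1, hle⟩)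
    · exact mem_union_right _ (mem_biUnion.2 ⟨i, mem_univ _, mem_filter.2 ⟨hw.1, hi⟩⟩)
  calc #(chargedNeighbors S k v)
      ≤ #(lowerNeighbors S k v ∪ univ.biUnion (neighborsBeatingIn S k v)) := card_le_card hcover
    _ ≤ #(lowerNeighbors S k v) + #(univ.biUnion (neighborsBeatingIn S k v)) := card_union_le _ _
    _ ≤ _ := Nat.add_le_add_left card_biUnion_le _

lemma card_lowerNeighbors_lt (hv : v ∈ S) : #(lowerNeighbors S k v) < #(dominated S v) := by
  refine (card_le_card fun w hw => ?_).trans_lt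
    (card_erase_lt_of_mem (mem_dominated.2 ⟨hv, le_rfl⟩))
  obtain ⟨hw, hwv⟩ := mem_filter.1 hw
  obtain ⟨hwS, hne, -⟩ := mem_shallowNeighbors.1 hw
  exact mem_erase.2 ⟨hne, mem_dominated.2 ⟨hwS, hwv⟩⟩

lemma card_lowerNeighbors_le (hv : v ∈ S) : #(lowerNeighbors S k v) ≤ k - 1 := by
  obtain hempty | ⟨w, hw⟩ := (lowerNeighbors S k v).eq_empty_or_nonempty
  · simp [hempty]
  obtain ⟨hw, hwv⟩ := mem_filter.1 hw
  have hsmall := (mem_shallowNeighbors.1 hw).2.2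
  rw [sup_eq_left.2 hwv] at hsmall
  have := card_lowerNeighbors_lt (k := k) hv
  omega

lemma card_neighborsBeatingIn_add_card_dominated_le {i : Fin 3}
    (hne : (neighborsBeatingIn S k v i).Nonempty) :
    #(neighborsBeatingIn S k v i) + #(dominated S v) ≤ k := by
  obtain ⟨wmax, hwmax, hmax⟩ := exists_max_image _ (coord i) hne
  have hbelow : neighborsBeatingIn S k v i ∪ dominated S v ⊆ dominated S (v ⊔ wmax) := by
    refine union_subset (fun w hw => ?_) (dominated_mono le_sup_left)
    obtain ⟨hw', -, hwv⟩ := mem_filter.1 hw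
    refine mem_dominated.2 ⟨(mem_shallowNeighbors.1 hw').1, le_iff_forall_coord.2 fun j => ?_⟩
    rw [coord_sup]
    by_cases hj : j = i
    · exact hj ▸ le_sup_of_le_right (hmax w hw)
    · exact le_sup_of_le_left (hwv j hj)
  have hdisj : Disjoint (neighborsBeatingIn S k v i) (dominated S v) :=
    disjoint_left.2 fun w hw hwv => (mem_filter.1 hw).2.1.not_ge
      (le_iff_forall_coord.1 (mem_dominated.1 hwv).2 i)
  calc #(neighborsBeatingIn S k v i) + #(dominated S v)
      = #(neighborsBeatingIn S k v i ∪ dominated S v) := (card_union_of_disjoint hdisj).symm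
    _ ≤ #(dominated S (v ⊔ wmax)) := card_le_card hbelow
    _ ≤ k := (mem_shallowNeighbors.1 (mem_filter.1 hwmax).1).2.2

lemma card_neighborsBeatingIn_eq_zero_or (i : Fin 3) :
    #(neighborsBeatingIn S k v i) = 0 ∨
      #(neighborsBeatingIn S k v i) + #(dominated S v) ≤ k := by
  obtain hempty | hne := (neighborsBeatingIn S k v i).eq_empty_or_nonempty
  · exact Or.inl (card_eq_zero.2 hempty)
  · exact Or.inr (card_neighborsBeatingIn_add_card_dominated_le hne)

lemma card_chargedNeighbors_le (hv : v ∈ S) : #(chargedNeighbors S k v) ≤ 3 * (k - 1) := by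
  have hsum : #(chargedNeighbors S k v) ≤ #(lowerNeighbors S k v) + ∑ i, _ :=
    card_chargedNeighbors_le_sum
  have hbeat : ∀ i, #(neighborsBeatingIn S k v i) = 0 ∨ _ := card_neighborsBeatingIn_eq_zero_or
  rw [Fin.sum_univ_three] at hsum
  have := card_lowerNeighbors_lt (k := k) hv
  have := card_lowerNeighbors_le (k := k) hv
  have := hbeat 0
  have := hbeat 1
  have := hbeat 2
  omega

lemma card_chargedNeighbors_le_of_forall_coord_le (hv : v ∈ S)
    (hmax : ∀ w ∈ S, coord 0 w ≤ coord 0 v) : #(chargedNeighbors S k v) ≤ 2 * (k - 1) := by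
  have hsum : #(chargedNeighbors S k v) ≤ #(lowerNeighbors S k v) + ∑ i, _ :=
    card_chargedNeighbors_le_sum
  have hbeat : ∀ i, #(neighborsBeatingIn S k v i) = 0 ∨ _ := card_neighborsBeatingIn_eq_zero_or
  rw [Fin.sum_univ_three] at hsum
  have hbeat₀ : #(neighborsBeatingIn S k v 0) = 0 :=
    card_eq_zero.2 <| filter_eq_empty_iff.2 fun w hw hbeats =>
      hbeats.1.not_ge (hmax w (mem_shallowNeighbors.1 hw).1)
  have := card_lowerNeighbors_lt (k := k) hv
  have := card_lowerNeighbors_le (k := k) hv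
  have := hbeat 1
  have := hbeat 2
  omega

variable (S k)

lemma sum_card_shallowNeighbors_le :
    ∑ p ∈ S, #(shallowNeighbors S k p) ≤ 2 * ∑ v ∈ S, #(chargedNeighbors S k v) := by
  have hsplit : ∀ p, #(shallowNeighbors S k p) ≤
      #(chargedNeighbors S k p) + #((shallowNeighbors S k p).filter (numGreater p · ≤ 1)) := by
    intro p
    refine (card_le_card fun w hw => ?_).trans (card_union_le _ _)
    have := numGreater_add_numGreater_le w p
    by_cases hwp : numGreater w p ≤ 1
    · exact mem_union_left _ (mem_filter.2 ⟨hw, hwp⟩)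
    · exact mem_union_right _ (mem_filter.2 ⟨hw, by omega⟩)
  have hswap : ∑ p ∈ S, #((shallowNeighbors S k p).filter (numGreater p · ≤ 1)) =
      ∑ v ∈ S, #(chargedNeighbors S k v) := by
    have := sum_card_bipartiteAbove_eq_sum_card_bipartiteBelow (s := S) (t := S)
      (r := fun p w => w ∈ shallowNeighbors S k p ∧ numGreater p w ≤ 1)
    convert this using 3 with p hp v hv
    · ext w
      simp only [bipartiteAbove, mem_filter, mem_shallowNeighbors]
      tauto
    · ext p
      simp only [bipartiteBelow, chargedNeighbors, mem_filter]
      constructor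
      · exact fun ⟨hpv, hnum⟩ => ⟨(mem_shallowNeighbors.1 hpv).1,
          (mem_shallowNeighbors_comm (mem_shallowNeighbors.1 hpv).1 hv).2 hpv, hnum⟩
      · exact fun ⟨hp, hvp, hnum⟩ => ⟨(mem_shallowNeighbors_comm hp hv).1 hvp, hnum⟩
  calc ∑ p ∈ S, #(shallowNeighbors S k p)
      ≤ ∑ p ∈ S, (#(chargedNeighbors S k p) +
          #((shallowNeighbors S k p).filter (numGreater p · ≤ 1))) :=
        sum_le_sum fun p _ => hsplit p
    _ = 2 * ∑ v ∈ S, #(chargedNeighbors S k v) := by rw [sum_add_distrib, hswap, two_mul]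

end Charging

theorem exists_card_shallowNeighbors_lt {α : Type*} [LinearOrder α] {S : Finset (α × α × α)}
    {k : ℕ} (hk : 2 ≤ k) (hS : S.Nonempty) :
    ∃ p ∈ S, #(shallowNeighbors S k p) < 6 * (k - 1) := by
  obtain ⟨v₀, hv₀, hmax⟩ := exists_max_image S (coord 0) hS
  have hcharged : ∑ v ∈ S, #(chargedNeighbors S k v) < ∑ _v ∈ S, 3 * (k - 1) :=
    sum_lt_sum (fun v hv => card_chargedNeighbors_le hv)
      ⟨v₀, hv₀,
        (card_chargedNeighbors_le_of_forall_coord_le hv₀ hmax).trans_lt (by omega)⟩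
  refine exists_lt_of_sum_lt ?_
  calc ∑ p ∈ S, #(shallowNeighbors S k p)
      ≤ 2 * ∑ v ∈ S, #(chargedNeighbors S k v) := sum_card_shallowNeighbors_le S k
    _ < 2 * ∑ _v ∈ S, 3 * (k - 1) := by omega
    _ = ∑ _p ∈ S, 6 * (k - 1) := by rw [mul_sum]; ring_nf

end Orthant

/-- `c₃(k) ≤ 6(k−1)`: every finite set `S ⊆ ℝ³` can be colored with `6(k−1)`
colors so that for every `q ∈ ℝ³`, the set `e(q)` of points of `S` dominated by
`q` contains at least `min (|e(q)|, k)` points with mutually distinct colors. -/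
theorem three_dim_polychromatic (S : Finset (ℝ × ℝ × ℝ)) (k : ℕ) (hk : 2 ≤ k) :
    ∃ f : ℝ × ℝ × ℝ → Fin (6 * (k - 1)),
      ∀ q : ℝ × ℝ × ℝ,
        min (S.filter (fun u => Dominates q u)).card k ≤
          ((S.filter (fun u => Dominates q u)).image f).card := by
  obtain ⟨f, hf⟩ := Orthant.exists_isPolychromatic_of_exists_card_shallowNeighbors_lt (by omega)
    (fun _ hT => Orthant.exists_card_shallowNeighbors_lt hk hT) S
  refine ⟨f, fun q => ?_⟩
  have hrange : S.filter (fun u => Dominates q u) = Orthant.dominated S q := by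
    ext u
    rw [Finset.mem_filter, Orthant.mem_dominated, Dominates, Prod.le_def, Prod.le_def]
  simpa only [hrange] using hf q
end

section
/- Let Q ⊆ ℝ² be a range with at least three distinct directions, and let k ≥ 2. Then there exists a finite set S of homothets of Q such that for every m < 4·⌊k/2⌋ and every coloring f : S → Fin m, there exists a point p ∈ ℝ² covered by exactly r members of S such that the number of distinct colors among the members of S containing p is strictly less than min(r, k). (In the paper's notation: c̄_Q(k) ≥ 4⌊k/2⌋.) -/
/-!
If any two members of a finite family `S` share a point covered by at most `k` members of `S`,
then a coloring in which every point `p` sees `min (depth p) k` colors is injective on `S`, so it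
uses at least `|S|` colors. It therefore suffices to find four families of `⌊k/2⌋` homothets of `Q`
such that for any two of the families some point lies in exactly the members of those two.

Near a boundary point with unique outer normal `v`, large homothets of `Q` placed there behave on
any finite set of points like the half-plane with outer normal `v`, small ones stay small, and
homothets of distinct ratios are distinct because their areas differ. Label the three normals so
that `W₁` and `W₃` lie on opposite sides of the line `ℝ • W₂`. Two families then behave like
half-planes with outer normals `W₁` and `W₃`, a third like a bounded piece of a half-plane with
outer normal `W₂`, and the fourth is a cluster of tiny copies, and six explicit points realise the
six pairs.
-/

open scoped Classical

/-- `R` is a homothet of `Q`. -/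
def IsHomothet (Q R : Set (ℝ × ℝ)) : Prop :=
  ∃ t : ℝ × ℝ, ∃ l : ℝ, 0 < l ∧ R = homothet Q t l

/-- `v` is a unit outer normal vector of `Q` at `p`. -/
def IsNormalAt (Q : Set (ℝ × ℝ)) (p v : ℝ × ℝ) : Prop :=
  v.1 ^ 2 + v.2 ^ 2 = 1 ∧ ∀ x ∈ Q, (x.1 - p.1) * v.1 + (x.2 - p.2) * v.2 ≤ 0

/-- `Q` has at least three distinct directions: there are three boundary points at
which the normal is well-defined (unique) and the three normals are pairwise
linearly independent. -/
def HasThreeDirections (Q : Set (ℝ × ℝ)) : Prop :=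
  ∃ p₁ p₂ p₃ v₁ v₂ v₃ : ℝ × ℝ,
    p₁ ∈ frontier Q ∧ p₂ ∈ frontier Q ∧ p₃ ∈ frontier Q ∧
    IsNormalAt Q p₁ v₁ ∧ (∀ w, IsNormalAt Q p₁ w → w = v₁) ∧
    IsNormalAt Q p₂ v₂ ∧ (∀ w, IsNormalAt Q p₂ w → w = v₂) ∧
    IsNormalAt Q p₃ v₃ ∧ (∀ w, IsNormalAt Q p₃ w → w = v₃) ∧
    v₁.1 * v₂.2 - v₁.2 * v₂.1 ≠ 0 ∧
    v₁.1 * v₃.2 - v₁.2 * v₃.1 ≠ 0 ∧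
    v₂.1 * v₃.2 - v₂.2 * v₃.1 ≠ 0

open scoped Pointwise

theorem IsHomothet.smul {Q R : Set (ℝ × ℝ)} (hR : IsHomothet Q R) {θ : ℝ} (hθ : 0 < θ) :
    IsHomothet Q (θ • R) := by
  obtain ⟨t, l, hl, rfl⟩ := hR
  refine ⟨θ • t, θ * l, mul_pos hθ hl, ?_⟩
  rw [homothet, homothet, ← Set.image_smul, Set.image_image]
  congr 1
  funext x
  rw [smul_add, smul_smul]

namespace Polychromatic

open Set Filter Function MeasureTheory

def PairwiseShallow {α : Type*} (S : Finset (Set α)) (k : ℕ) : Prop :=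
  ∀ R ∈ S, ∀ R' ∈ S, ∃ p, p ∈ R ∧ p ∈ R' ∧ (S.filter (fun R => p ∈ R)).card ≤ k

theorem PairwiseShallow.mono {α : Type*} {S : Finset (Set α)} {k k' : ℕ}
    (hS : PairwiseShallow S k) (hk : k ≤ k') : PairwiseShallow S k' := fun R hR R' hR' =>
  let ⟨p, hpR, hpR', hp⟩ := hS R hR R' hR'
  ⟨p, hpR, hpR', hp.trans hk⟩

theorem PairwiseShallow.exists_card_image_lt {α : Type*} {S : Finset (Set α)} {k m : ℕ}
    (hS : PairwiseShallow S k) (hm : m < S.card) (f : Set α → Fin m) :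
    ∃ p, ((S.filter (fun R => p ∈ R)).image f).card < min (S.filter (fun R => p ∈ R)).card k := by
  by_contra! h
  have hinj : Set.InjOn f S := by
    intro R hR R' hR' hf
    obtain ⟨p, hpR, hpR', hdepth⟩ := hS R hR R' hR'
    have hcard : ((S.filter (fun R => p ∈ R)).image f).card = (S.filter (fun R => p ∈ R)).card :=
      le_antisymm Finset.card_image_le (by simpa [min_eq_left hdepth] using h p)
    exact Finset.card_image_iff.mp hcard (Finset.mem_filter.2 ⟨hR, hpR⟩)
      (Finset.mem_filter.2 ⟨hR', hpR'⟩) hf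
  have := Finset.card_le_card_of_injOn f (t := Finset.univ) (by simp [Set.MapsTo]) hinj
  simp only [Finset.card_univ, Fintype.card_fin] at this
  omega

def HasPairWitnesses {α ι : Type*} [LT ι] (c : ι → ℕ → Set α) (n : ℕ) : Prop :=
  ∀ i j, i < j → ∃ x, ∀ l, ∀ a < n, x ∈ c l a ↔ l = i ∨ l = j

theorem HasPairWitnesses.exists_pairwiseShallow {α ι : Type*} [Fintype ι] [LinearOrder ι]
    {c : ι → ℕ → Set α} {n : ℕ} (hsep : HasPairWitnesses c n) (hι : 3 ≤ Fintype.card ι)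
    (hc : ∀ i, Injective (c i)) :
    ∃ S : Finset (Set α), (∀ R ∈ S, ∃ i a, R = c i a) ∧ S.card = Fintype.card ι * n ∧
      PairwiseShallow S (2 * n) := by
  have hsep' : ∀ i j, i ≠ j → ∃ x, ∀ l, ∀ a < n, x ∈ c l a ↔ l = i ∨ l = j := by
    intro i j hij
    rcases hij.lt_or_gt with h | h
    · exact hsep i j h
    · obtain ⟨x, hx⟩ := hsep j i h
      exact ⟨x, fun l a ha => (hx l a ha).trans or_comm⟩
  have hthird : ∀ i j : ι, ∃ l, l ≠ i ∧ l ≠ j := by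
    intro i j
    obtain ⟨l, -, hl⟩ := Finset.exists_mem_notMem_of_card_lt_card (s := {i, j})
      (t := Finset.univ) (by rw [Finset.card_univ]; exact Finset.card_le_two.trans_lt hι)
    simp only [Finset.mem_insert, Finset.mem_singleton, not_or] at hl
    exact ⟨l, hl⟩
  let g : ι × Fin n → Set α := fun x => c x.1 x.2
  have hg : Injective g := by
    rintro ⟨i, a⟩ ⟨i', b⟩ h
    by_cases hii : i = i'
    · subst hii
      exact Prod.ext rfl (Fin.ext (hc i h))
    · obtain ⟨l, hli, hli'⟩ := hthird i i'
      obtain ⟨x, hx⟩ := hsep' i l hli.symm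
      have hxi' : x ∈ c i' b := (show c i a = c i' b from h) ▸ (hx i a a.2).2 (Or.inl rfl)
      rcases (hx i' b b.2).1 hxi' with h' | h'
      exacts [absurd h'.symm hii, absurd h' hli'.symm]
  refine ⟨Finset.univ.image g, fun R hR => ?_, by simp [Finset.card_image_of_injective _ hg],
    fun R hR R' hR' => ?_⟩
  · obtain ⟨⟨i, a⟩, -, rfl⟩ := Finset.mem_image.1 hR
    exact ⟨i, a, rfl⟩
  obtain ⟨⟨i, a⟩, -, rfl⟩ := Finset.mem_image.1 hR
  obtain ⟨⟨i', b⟩, -, rfl⟩ := Finset.mem_image.1 hR'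
  obtain ⟨j, hji, hj⟩ : ∃ j, j ≠ i ∧ (i' = i ∨ i' = j) := by
    by_cases h : i' = i
    · obtain ⟨j, hj, -⟩ := hthird i i
      exact ⟨j, hj, Or.inl h⟩
    · exact ⟨i', h, Or.inr rfl⟩
  obtain ⟨x, hx⟩ := hsep' i j hji.symm
  refine ⟨x, (hx i a a.2).2 (Or.inl rfl), (hx i' b b.2).2 hj, ?_⟩
  calc ((Finset.univ.image g).filter (fun R => x ∈ R)).card
      ≤ (({i, j} ×ˢ Finset.univ).image g).card := by
        refine Finset.card_le_card fun R hR => ?_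
        simp only [Finset.mem_filter, Finset.mem_image, Finset.mem_univ, true_and] at hR
        obtain ⟨⟨⟨l, a'⟩, rfl⟩, hxR⟩ := hR
        have := (hx l a' a'.2).1 hxR
        exact Finset.mem_image.2 ⟨⟨l, a'⟩, by simpa using this, rfl⟩
    _ ≤ ({i, j} ×ˢ (Finset.univ : Finset (Fin n))).card := Finset.card_image_le
    _ ≤ 2 * n := by
        rw [Finset.card_product, Finset.card_univ, Fintype.card_fin]
        exact Nat.mul_le_mul_right _ Finset.card_le_two

def dot (x y : ℝ × ℝ) : ℝ := x.1 * y.1 + x.2 * y.2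

def cross (x y : ℝ × ℝ) : ℝ := x.1 * y.2 - x.2 * y.1

section Dot

variable (x y w : ℝ × ℝ) (c : ℝ)

@[simp] theorem dot_add_left : dot (x + y) w = dot x w + dot y w := by
  simp only [dot, Prod.fst_add, Prod.snd_add]; ring

@[simp] theorem dot_sub_left : dot (x - y) w = dot x w - dot y w := by
  simp only [dot, Prod.fst_sub, Prod.snd_sub]; ring

@[simp] theorem dot_neg_left : dot (-x) w = -dot x w := by
  simp only [dot, Prod.fst_neg, Prod.snd_neg]; ring

@[simp] theorem dot_smul_left : dot (c • x) w = c * dot x w := by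
  simp only [dot, Prod.smul_fst, Prod.smul_snd, smul_eq_mul]; ring

@[simp] theorem dot_smul_right : dot x (c • w) = c * dot x w := by
  simp only [dot, Prod.smul_fst, Prod.smul_snd, smul_eq_mul]; ring

end Dot

theorem isNormalAt_iff {Q : Set (ℝ × ℝ)} {p v : ℝ × ℝ} :
    IsNormalAt Q p v ↔ v.1 ^ 2 + v.2 ^ 2 = 1 ∧ ∀ x ∈ Q, dot (x - p) v ≤ 0 := Iff.rfl

theorem abs_dot_le_one {x w : ℝ × ℝ} (hx : x.1 ^ 2 + x.2 ^ 2 = 1)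
    (hw : w.1 ^ 2 + w.2 ^ 2 = 1) : |dot x w| ≤ 1 := by
  rw [abs_le, dot]
  constructor <;> nlinarith [sq_nonneg (x.1 + w.1), sq_nonneg (x.2 + w.2),
    sq_nonneg (x.1 - w.1), sq_nonneg (x.2 - w.2)]

theorem dot_self_eq_one {w : ℝ × ℝ} (hw : w.1 ^ 2 + w.2 ^ 2 = 1) : dot w w = 1 := by
  rw [dot, ← hw]; ring

theorem apply_eq_dot (f : ℝ × ℝ →L[ℝ] ℝ) (x : ℝ × ℝ) : f x = dot x (f (1, 0), f (0, 1)) := by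
  have hx : x = x.1 • ((1 : ℝ), (0 : ℝ)) + x.2 • ((0 : ℝ), (1 : ℝ)) := by ext <;> simp
  calc f x = f (x.1 • ((1 : ℝ), (0 : ℝ)) + x.2 • ((0 : ℝ), (1 : ℝ))) := congrArg f hx
    _ = _ := by rw [map_add, map_smul, map_smul, dot, smul_eq_mul, smul_eq_mul]

theorem exists_dot_eq_of_cross_ne_zero {v w : ℝ × ℝ} (h : cross v w ≠ 0) (a b : ℝ) :
    ∃ x, dot x v = a ∧ dot x w = b := by
  refine ⟨((a * w.2 - b * v.2) / cross v w, (b * v.1 - a * w.1) / cross v w), ?_, ?_⟩ <;>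
  · simp only [dot]
    field_simp
    simp only [cross]
    ring

theorem cross_mul_cross_neg_of_ne_zero {v₁ v₂ v₃ : ℝ × ℝ} (h₁₂ : cross v₁ v₂ ≠ 0)
    (h₁₃ : cross v₁ v₃ ≠ 0) (h₂₃ : cross v₂ v₃ ≠ 0) :
    cross v₂ v₁ * cross v₂ v₃ < 0 ∨ cross v₁ v₂ * cross v₁ v₃ < 0 ∨
      cross v₃ v₁ * cross v₃ v₂ < 0 := by
  by_contra! h
  obtain ⟨h₁, h₂, h₃⟩ := h
  have hprod : cross v₂ v₁ * cross v₂ v₃ * (cross v₁ v₂ * cross v₁ v₃) *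
      (cross v₃ v₁ * cross v₃ v₂) = -(cross v₁ v₂ * cross v₁ v₃ * cross v₂ v₃) ^ 2 := by
    simp only [cross]; ring
  have : 0 < (cross v₁ v₂ * cross v₁ v₃ * cross v₂ v₃) ^ 2 := by positivity
  nlinarith [mul_nonneg (mul_nonneg h₁ h₂) h₃]

theorem exists_dot_eq_zero_of_cross_mul_cross_neg {m x y : ℝ × ℝ}
    (h : cross m x * cross m y < 0) {C : ℝ} (hC : 0 ≤ C) :
    ∃ d, dot d m = 0 ∧ dot d x ≤ -C ∧ C ≤ dot d y := by
  have hx : cross m x ≠ 0 := left_ne_zero_of_mul h.ne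
  have hy : cross m y ≠ 0 := right_ne_zero_of_mul h.ne
  have hxy : cross m x / cross m y < 0 := div_neg_iff.2 (mul_neg_iff.1 h)
  have hyx : cross m y / cross m x < 0 := div_neg_iff.2 (mul_neg_iff.1 (by rwa [mul_comm] at h))
  have hrot : ∀ z, dot (-m.2, m.1) z = cross m z := fun z => by simp only [dot, cross]; ring
  refine ⟨(C * ((cross m y)⁻¹ - (cross m x)⁻¹)) • (-m.2, m.1), ?_, ?_, ?_⟩ <;>
    rw [dot_smul_left, hrot]
  · simp only [cross]; ring
  · have : C * ((cross m y)⁻¹ - (cross m x)⁻¹) * cross m x = C * (cross m x / cross m y) - C := by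
      field_simp
    nlinarith
  · have : C * ((cross m y)⁻¹ - (cross m x)⁻¹) * cross m y = C - C * (cross m y / cross m x) := by
      field_simp
    nlinarith

structure IsUniqueNormalAt (Q : Set (ℝ × ℝ)) (P v : ℝ × ℝ) : Prop where
  mem : P ∈ Q
  normal : IsNormalAt Q P v
  unique : ∀ w, IsNormalAt Q P w → w = v

variable {Q : Set (ℝ × ℝ)} {P A v w x y : ℝ × ℝ}

theorem exists_pos_eq_smul_of_forall_dot_nonpos (hu : ∀ u, IsNormalAt Q P u → u = v)
    (hw : w ≠ 0) (h : ∀ x ∈ Q, dot (x - P) w ≤ 0) : ∃ c : ℝ, 0 < c ∧ w = c • v := by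
  have hpos : 0 < w.1 ^ 2 + w.2 ^ 2 := by
    by_contra! hle
    have h₁ : w.1 ^ 2 = 0 := by nlinarith [sq_nonneg w.1, sq_nonneg w.2]
    have h₂ : w.2 ^ 2 = 0 := by nlinarith [sq_nonneg w.1, sq_nonneg w.2]
    exact hw (Prod.ext (pow_eq_zero_iff two_ne_zero |>.1 h₁) (pow_eq_zero_iff two_ne_zero |>.1 h₂))
  have hc : 0 < √(w.1 ^ 2 + w.2 ^ 2) := Real.sqrt_pos.2 hpos
  have hnormal : IsNormalAt Q P ((√(w.1 ^ 2 + w.2 ^ 2))⁻¹ • w) := by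
    refine isNormalAt_iff.2 ⟨?_, fun x hx => ?_⟩
    · simp only [Prod.smul_fst, Prod.smul_snd, smul_eq_mul, mul_pow, ← mul_add, inv_pow,
        Real.sq_sqrt hpos.le]
      exact inv_mul_cancel₀ hpos.ne'
    · rw [dot_smul_right]
      exact mul_nonpos_of_nonneg_of_nonpos (inv_nonneg.2 hc.le) (h x hx)
  refine ⟨√(w.1 ^ 2 + w.2 ^ 2), hc, ?_⟩
  rw [← hu _ hnormal, smul_smul, mul_inv_cancel₀ hc.ne', one_smul]

theorem add_smul_mem_of_le (hconv : Convex ℝ Q) (hP : P ∈ Q) {s t : ℝ} (ht : 0 < t)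
    (hy : P + t • y ∈ Q) (hs : 0 ≤ s) (hst : s ≤ t) : P + s • y ∈ Q := by
  have := hconv.add_smul_mem hP hy ⟨div_nonneg hs ht.le, div_le_one_of_le₀ hst ht.le⟩
  rwa [smul_smul, div_mul_cancel₀ _ ht.ne'] at this

-- The directions `y` with `P + t • y ∈ Q` for some `t > 0` form a convex cone `U`. If `d` were not
-- interior to `U`, a functional separating `d` from `interior U` would be a second outer normal.
theorem exists_pos_add_smul_mem (hconv : Convex ℝ Q) (hint : (interior Q).Nonempty)
    (hP : P ∈ Q) (hu : ∀ w, IsNormalAt Q P w → w = v) {d : ℝ × ℝ} (hd : dot d v < 0) :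
    ∃ t : ℝ, 0 < t ∧ P + t • d ∈ Q := by
  set U := {y : ℝ × ℝ | ∃ t : ℝ, 0 < t ∧ P + t • y ∈ Q}
  have hsmul : ∀ y ∈ U, ∀ c : ℝ, 0 < c → c • y ∈ U := by
    rintro y ⟨t, ht, hy⟩ c hc
    exact ⟨t / c, div_pos ht hc, by rwa [smul_smul, div_mul_cancel₀ _ hc.ne']⟩
  have hUconv : Convex ℝ U := by
    rintro y₁ ⟨t₁, ht₁, hy₁⟩ y₂ ⟨t₂, ht₂, hy₂⟩ a b ha hb hab
    have ht : 0 < min t₁ t₂ := lt_min ht₁ ht₂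
    refine ⟨min t₁ t₂, ht, ?_⟩
    have h₁ := add_smul_mem_of_le hconv hP ht₁ hy₁ ht.le (min_le_left _ _)
    have h₂ := add_smul_mem_of_le hconv hP ht₂ hy₂ ht.le (min_le_right _ _)
    convert hconv h₁ h₂ ha hb hab using 1
    calc P + min t₁ t₂ • (a • y₁ + b • y₂)
        = (a + b) • P + min t₁ t₂ • (a • y₁ + b • y₂) := by rw [hab, one_smul]
      _ = _ := by module
  have hQU : ∀ q ∈ Q, q - P ∈ U := fun q hq => ⟨1, one_pos, by simpa using hq⟩
  have hintU : (interior U).Nonempty := by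
    obtain ⟨z, hz⟩ := hint
    refine ⟨z - P, interior_maximal (t := {y | P + y ∈ interior Q}) ?_ ?_
      (show P + (z - P) ∈ interior Q by rwa [add_sub_cancel])⟩
    · exact fun y hy => ⟨1, one_pos, by simpa using interior_subset hy⟩
    · exact isOpen_interior.preimage (continuous_const.add continuous_id)
  suffices d ∈ interior U from (interior_subset this : d ∈ U)
  by_contra hdU
  obtain ⟨f, hf⟩ := geometric_hahn_banach_open_point hUconv.interior isOpen_interior hdU
  have hle : ∀ y ∈ U, f y ≤ f d := by
    have : closure (interior U) ⊆ {y | f y ≤ f d} :=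
      closure_minimal (fun y hy => (hf y hy).le) (isClosed_le f.continuous continuous_const)
    rw [hUconv.closure_interior_eq_closure_of_nonempty_interior hintU] at this
    exact fun y hy => this (subset_closure hy)
  have h0 : 0 ≤ f d := by simpa using hle 0 ⟨1, one_pos, by simpa using hP⟩
  have hnonpos : ∀ y ∈ U, f y ≤ 0 := by
    intro y hy
    by_contra! hfy
    have := hle (((f d + 1) / f y) • y) (hsmul y hy _ (by positivity))
    rw [map_smul, smul_eq_mul, div_mul_cancel₀ _ hfy.ne'] at this
    linarith
  have hw : ((f (1, 0), f (0, 1)) : ℝ × ℝ) ≠ 0 := by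
    intro hw0
    obtain ⟨u, hu'⟩ := hintU
    have := hf u hu'
    rw [apply_eq_dot f u, apply_eq_dot f d, hw0] at this
    simp [dot] at this
  obtain ⟨c, hc, hwc⟩ := exists_pos_eq_smul_of_forall_dot_nonpos hu hw
    fun x hx => by rw [← apply_eq_dot]; exact hnonpos _ (hQU x hx)
  have hfd : f d = c * dot d v := by rw [apply_eq_dot, hwc, dot_smul_right]
  nlinarith

def anchoredHomothet (Q : Set (ℝ × ℝ)) (P A : ℝ × ℝ) (μ : ℝ) : Set (ℝ × ℝ) :=
  homothet Q (A - μ • P) μ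

theorem isHomothet_anchoredHomothet {μ : ℝ} (hμ : 0 < μ) :
    IsHomothet Q (anchoredHomothet Q P A μ) :=
  ⟨_, _, hμ, rfl⟩

theorem mem_anchoredHomothet {μ : ℝ} (hμ : μ ≠ 0) :
    y ∈ anchoredHomothet Q P A μ ↔ P + μ⁻¹ • (y - A) ∈ Q := by
  constructor
  · rintro ⟨x, hx, rfl⟩
    rwa [show μ • x + (A - μ • P) - A = μ • (x - P) by module, smul_smul, inv_mul_cancel₀ hμ,
      one_smul, add_sub_cancel]
  · intro h
    refine ⟨_, h, ?_⟩
    dsimp only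
    rw [smul_add, smul_smul, mul_inv_cancel₀ hμ, one_smul]
    abel

theorem exists_sub_eq_smul_of_mem_anchoredHomothet {μ : ℝ}
    (h : y ∈ anchoredHomothet Q P A μ) : ∃ q ∈ Q, y - A = μ • (q - P) := by
  obtain ⟨q, hq, rfl⟩ := h
  exact ⟨q, hq, by module⟩

theorem dot_sub_nonpos_of_mem_anchoredHomothet (hN : IsNormalAt Q P v) {μ : ℝ} (hμ : 0 ≤ μ)
    (h : y ∈ anchoredHomothet Q P A μ) : dot (y - A) v ≤ 0 := by
  obtain ⟨q, hq, hyq⟩ := exists_sub_eq_smul_of_mem_anchoredHomothet h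
  rw [hyq, dot_smul_left]
  exact mul_nonpos_of_nonneg_of_nonpos hμ ((isNormalAt_iff.1 hN).2 q hq)

theorem abs_dot_sub_le_of_mem_anchoredHomothet {D μ : ℝ}
    (hD : ∀ q ∈ Q, |dot (q - P) w| ≤ D) (hμ : 0 ≤ μ) (h : y ∈ anchoredHomothet Q P A μ) :
    |dot (y - A) w| ≤ μ * D := by
  obtain ⟨q, hq, hyq⟩ := exists_sub_eq_smul_of_mem_anchoredHomothet h
  rw [hyq, dot_smul_left, abs_mul, abs_of_nonneg hμ]
  exact mul_le_mul_of_nonneg_left (hD q hq) hμ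

theorem eventually_mem_anchoredHomothet (hconv : Convex ℝ Q) (hint : (interior Q).Nonempty)
    (hP : P ∈ Q) (hu : ∀ w, IsNormalAt Q P w → w = v) (hx : dot (x - A) v < 0) :
    ∀ᶠ μ in atTop, x ∈ anchoredHomothet Q P A μ := by
  obtain ⟨t, ht, hxt⟩ := exists_pos_add_smul_mem hconv hint hP hu hx
  filter_upwards [eventually_ge_atTop t⁻¹] with μ hμ
  have hμpos : 0 < μ := (inv_pos.2 ht).trans_le hμ
  rw [mem_anchoredHomothet hμpos.ne']
  exact add_smul_mem_of_le hconv hP ht hxt (inv_nonneg.2 hμpos.le) (inv_le_of_inv_le₀ ht hμ)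

theorem volume_homothet (Q : Set (ℝ × ℝ)) (t : ℝ × ℝ) (l : ℝ) :
    volume (homothet Q t l) = ENNReal.ofReal (l ^ 2) * volume Q := by
  rw [homothet, ← Set.image_image (fun x => x + t) (fun x => l • x), Set.image_smul,
    Set.image_add_right, measure_preimage_add_right, Measure.addHaar_smul]
  simp

theorem injective_anchoredHomothet_comp (hQc : IsCompact Q) (hint : (interior Q).Nonempty)
    {s : ℕ → ℝ} (hs : Injective s) (hpos : ∀ j, 0 < s j) :
    Injective fun j => anchoredHomothet Q P A (s j) := by
  have h0 : volume Q ≠ 0 :=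
    ((isOpen_interior.measure_pos volume hint).trans_le (measure_mono interior_subset)).ne'
  intro i j h
  have hvol := congrArg volume h
  simp only [anchoredHomothet, volume_homothet] at hvol
  rw [ENNReal.mul_left_inj h0 hQc.measure_lt_top.ne,
    ENNReal.ofReal_eq_ofReal_iff (sq_nonneg _) (sq_nonneg _),
    pow_left_inj₀ (hpos i).le (hpos j).le two_ne_zero] at hvol
  exact hs hvol

theorem exists_halfPlane_family (hQc : IsCompact Q) (hconv : Convex ℝ Q)
    (hint : (interior Q).Nonempty) (h : IsUniqueNormalAt Q P v) (A : ℝ × ℝ)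
    {X Y : Finset (ℝ × ℝ)} (hX : ∀ x ∈ X, dot (x - A) v < 0) (hY : ∀ y ∈ Y, 0 < dot (y - A) v) :
    ∃ c : ℕ → Set (ℝ × ℝ), (∀ j, IsHomothet Q (c j)) ∧ Injective c ∧
      (∀ j, (∀ x ∈ X, x ∈ c j) ∧ ∀ y ∈ Y, y ∉ c j) ∧
      ∀ (w : ℝ × ℝ) (n : ℕ), ∃ R, ∀ j < n, ∀ y ∈ c j, |dot (y - A) w| ≤ R := by
  obtain ⟨Λ, hΛ⟩ := eventually_atTop.1 <| (eventually_all_finset X).2 fun x hx =>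
    eventually_mem_anchoredHomothet hconv hint h.mem h.unique (hX x hx)
  have hpos : ∀ j : ℕ, 0 < max Λ 1 + j := fun j => by positivity
  refine ⟨fun j => anchoredHomothet Q P A (max Λ 1 + j),
    fun j => isHomothet_anchoredHomothet (hpos j),
    injective_anchoredHomothet_comp hQc hint (fun i j hij => by simpa using hij) hpos,
    fun j => ⟨hΛ _ (le_add_of_le_of_nonneg (le_max_left _ _) j.cast_nonneg),
      fun y hy hyc => (hY y hy).not_ge
        (dot_sub_nonpos_of_mem_anchoredHomothet h.normal (hpos j).le hyc)⟩,
    fun w n => ?_⟩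
  obtain ⟨D, hD⟩ := hQc.exists_bound_of_continuousOn (f := fun q => dot (q - P) w)
    (by unfold dot; fun_prop)
  simp only [Real.norm_eq_abs] at hD
  have hD0 : 0 ≤ D := (abs_nonneg _).trans (hD P h.mem)
  refine ⟨(max Λ 1 + n) * D, fun j hj y hy => ?_⟩
  calc |dot (y - A) w| ≤ (max Λ 1 + j) * D :=
        abs_dot_sub_le_of_mem_anchoredHomothet hD (hpos j).le hy
    _ ≤ (max Λ 1 + n) * D := by gcongr

theorem exists_small_family (hQc : IsCompact Q) (hconv : Convex ℝ Q)
    (hint : (interior Q).Nonempty) (h : IsUniqueNormalAt Q P v) (A : ℝ × ℝ)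
    {X : Finset (ℝ × ℝ)} (hX : ∀ x ∈ X, dot (x - A) v < 0) (w : ℝ × ℝ) (n : ℕ) :
    ∃ θ : ℝ, 0 < θ ∧ θ ≤ 1 ∧ ∃ c : ℕ → Set (ℝ × ℝ), (∀ j, IsHomothet Q (c j)) ∧ Injective c ∧
      (∀ j, ∀ x ∈ X, θ • x ∈ c j) ∧ ∀ j < n, ∀ y, 1 ≤ |dot (y - θ • A) w| → y ∉ c j := by
  obtain ⟨c, hch, hci, hcX, hcR⟩ :=
    exists_halfPlane_family hQc hconv hint h A hX (Y := ∅) (by simp)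
  obtain ⟨R, hR⟩ := hcR w n
  have hθ : 0 < (|R| + 1)⁻¹ := by positivity
  refine ⟨(|R| + 1)⁻¹, hθ, inv_le_one_of_one_le₀ (by linarith [abs_nonneg R]),
    fun j => (|R| + 1)⁻¹ • c j, fun j => (hch j).smul hθ,
    (Set.image_injective.2 (MulAction.injective₀ hθ.ne')).comp hci,
    fun j x hx => smul_mem_smul_set ((hcX j).1 x hx), ?_⟩
  rintro j hj _ hy ⟨z, hz, rfl⟩
  rw [← smul_sub, dot_smul_left, abs_mul, abs_of_pos hθ, le_inv_mul_iff₀ (by positivity)] at hy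
  linarith [hR j hj z hz, le_abs_self R]

theorem exists_separating_families_of_cross_mul_cross_neg (hQc : IsCompact Q) (hconv : Convex ℝ Q)
    (hint : (interior Q).Nonempty) {P₁ P₂ P₃ W₁ W₂ W₃ : ℝ × ℝ}
    (h₁ : IsUniqueNormalAt Q P₁ W₁) (h₂ : IsUniqueNormalAt Q P₂ W₂)
    (h₃ : IsUniqueNormalAt Q P₃ W₃) (hmid : cross W₂ W₁ * cross W₂ W₃ < 0)
    (h₁₃ : cross W₁ W₃ ≠ 0) (n : ℕ) :
    ∃ c : Fin 4 → ℕ → Set (ℝ × ℝ), (∀ i a, IsHomothet Q (c i a)) ∧ (∀ i, Injective (c i)) ∧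
      HasPairWitnesses c n := by
  obtain ⟨d, hd₂, hd₁, hd₃⟩ :=
    exists_dot_eq_zero_of_cross_mul_cross_neg hmid (C := 4) (by norm_num)
  obtain ⟨e, he₁, he₃⟩ := exists_dot_eq_of_cross_ne_zero h₁₃ 1 1
  obtain ⟨δ, hδ, hδe⟩ := exists_pos_mul_lt one_pos (dot e W₂)
  have hW₂ : dot W₂ W₂ = 1 := dot_self_eq_one (isNormalAt_iff.1 h₂.normal).1
  have hq₁ := abs_le.1 <|
    abs_dot_le_one (isNormalAt_iff.1 h₂.normal).1 (isNormalAt_iff.1 h₁.normal).1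
  have hq₃ := abs_le.1 <|
    abs_dot_le_one (isNormalAt_iff.1 h₂.normal).1 (isNormalAt_iff.1 h₃.normal).1
  -- `H₁`, `H₃` act like the half-planes through `-θ • W₂` with outer normals `W₁`, `W₃`, and `B`
  -- like the one through `0` with outer normal `W₂` except that it does not reach `F`; `G` is a
  -- cluster of tiny copies near `θ • (2 • W₂)`. The points `F, m₁, θ • a, m₃, θ • b, θ • c`
  -- witness the pairs `H₁H₃, H₁B, H₁G, H₃B, H₃G, BG`.
  set a := d + W₂ with ha
  set b := -d + W₂ with hb
  set c := δ • e - W₂ with hc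
  set m₁ := d - W₂ with hm₁
  set m₃ := -d - W₂ with hm₃
  obtain ⟨θ, hθ, hθ1, G, hGh, hGi, hGX, hGfar⟩ :=
    exists_small_family hQc hconv hint h₂ ((2 : ℝ) • W₂) (X := {a, b, c}) (by
      simp only [Finset.forall_mem_insert, Finset.mem_singleton, forall_eq, ha, hb, hc,
        dot_add_left, dot_sub_left, dot_neg_left, dot_smul_left, hd₂, hW₂]
      refine ⟨?_, ?_, ?_⟩ <;> nlinarith) W₁ n
  obtain ⟨B, hBh, hBi, hBX, hBR⟩ :=
    exists_halfPlane_family hQc hconv hint h₂ 0 (X := {θ • c, m₁, m₃}) (Y := {θ • a, θ • b})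
      (by
        simp only [Finset.forall_mem_insert, Finset.mem_singleton, forall_eq, sub_zero, hc, hm₁,
          hm₃, dot_sub_left, dot_neg_left, dot_smul_left, hd₂, hW₂]
        refine ⟨?_, ?_, ?_⟩ <;> nlinarith)
      (by
        simp only [Finset.forall_mem_insert, Finset.mem_singleton, forall_eq, sub_zero, ha, hb,
          dot_add_left, dot_neg_left, dot_smul_left, hd₂, hW₂]
        constructor <;> nlinarith)
  obtain ⟨RB, hRB⟩ := hBR W₁ n
  set F := -(|RB| + 3) • e with hF
  obtain ⟨H₁, hH₁h, hH₁i, hH₁X, -⟩ := exists_halfPlane_family hQc hconv hint h₁ (-θ • W₂)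
    (X := {F, m₁, θ • a}) (Y := {m₃, θ • b, θ • c})
    (by
      simp only [Finset.forall_mem_insert, Finset.mem_singleton, forall_eq, hF, hm₁, ha,
        dot_add_left, dot_sub_left, dot_smul_left, he₁]
      refine ⟨?_, ?_, ?_⟩ <;> nlinarith [abs_nonneg RB])
    (by
      simp only [Finset.forall_mem_insert, Finset.mem_singleton, forall_eq, hm₃, hb, hc,
        dot_add_left, dot_sub_left, dot_neg_left, dot_smul_left, he₁]
      refine ⟨?_, ?_, ?_⟩ <;> nlinarith)
  obtain ⟨H₃, hH₃h, hH₃i, hH₃X, -⟩ := exists_halfPlane_family hQc hconv hint h₃ (-θ • W₂)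
    (X := {F, m₃, θ • b}) (Y := {m₁, θ • a, θ • c})
    (by
      simp only [Finset.forall_mem_insert, Finset.mem_singleton, forall_eq, hF, hm₃, hb,
        dot_add_left, dot_sub_left, dot_neg_left, dot_smul_left, he₃]
      refine ⟨?_, ?_, ?_⟩ <;> nlinarith [abs_nonneg RB])
    (by
      simp only [Finset.forall_mem_insert, Finset.mem_singleton, forall_eq, hm₁, ha, hc,
        dot_add_left, dot_sub_left, dot_smul_left, he₃]
      refine ⟨?_, ?_, ?_⟩ <;> nlinarith)
  have hBF : ∀ j < n, F ∉ B j := fun j hj hFB => by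
    have := hRB j hj F hFB
    rw [sub_zero, hF, dot_smul_left, he₁, mul_one, abs_neg, abs_of_pos (by positivity)] at this
    linarith [le_abs_self RB]
  have hGF : ∀ j < n, m₁ ∉ G j ∧ m₃ ∉ G j ∧ F ∉ G j := fun j hj =>
    ⟨hGfar j hj m₁ (le_abs.2 (Or.inr (by
        simp only [hm₁, dot_sub_left, dot_smul_left]; nlinarith))),
      hGfar j hj m₃ (le_abs.2 (Or.inl (by
        simp only [hm₃, dot_sub_left, dot_neg_left, dot_smul_left]; nlinarith))),
      hGfar j hj F (le_abs.2 (Or.inr (by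
        simp only [hF, dot_sub_left, dot_smul_left, he₁]; nlinarith [abs_nonneg RB])))⟩
  simp only [Finset.forall_mem_insert, Finset.mem_singleton, forall_eq] at hGX hBX hH₁X hH₃X
  refine ⟨![H₁, H₃, B, G], fun i j => ?_, fun i => ?_, fun i j hij => ?_⟩
  · fin_cases i
    exacts [hH₁h j, hH₃h j, hBh j, hGh j]
  · fin_cases i
    exacts [hH₁i, hH₃i, hBi, hGi]
  fin_cases i <;> fin_cases j <;> try exact absurd hij (by decide)
  · exact ⟨F, fun l j hj => by fin_cases l <;> simp [hH₁X j, hH₃X j, hBF j hj, hGF j hj]⟩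
  · exact ⟨m₁, fun l j hj => by fin_cases l <;> simp [hH₁X j, hH₃X j, hBX j, hGF j hj]⟩
  · exact ⟨θ • a, fun l j hj => by fin_cases l <;> simp [hH₁X j, hH₃X j, hBX j, hGX j]⟩
  · exact ⟨m₃, fun l j hj => by fin_cases l <;> simp [hH₁X j, hH₃X j, hBX j, hGF j hj]⟩
  · exact ⟨θ • b, fun l j hj => by fin_cases l <;> simp [hH₁X j, hH₃X j, hBX j, hGX j]⟩
  · exact ⟨θ • c, fun l j hj => by fin_cases l <;> simp [hH₁X j, hH₃X j, hBX j, hGX j]⟩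

end Polychromatic

open Polychromatic

theorem HasThreeDirections.exists_separating_families {Q : Set (ℝ × ℝ)}
    (hdir : HasThreeDirections Q) (hQc : IsCompact Q) (hconv : Convex ℝ Q)
    (hint : (interior Q).Nonempty) (n : ℕ) :
    ∃ c : Fin 4 → ℕ → Set (ℝ × ℝ), (∀ i a, IsHomothet Q (c i a)) ∧
      (∀ i, Function.Injective (c i)) ∧ HasPairWitnesses c n := by
  obtain ⟨p₁, p₂, p₃, v₁, v₂, v₃, hp₁, hp₂, hp₃, hn₁, hu₁, hn₂, hu₂, hn₃, hu₃, h₁₂, h₁₃, h₂₃⟩ :=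
    hdir
  have h₁ : IsUniqueNormalAt Q p₁ v₁ := ⟨hQc.isClosed.frontier_subset hp₁, hn₁, hu₁⟩
  have h₂ : IsUniqueNormalAt Q p₂ v₂ := ⟨hQc.isClosed.frontier_subset hp₂, hn₂, hu₂⟩
  have h₃ : IsUniqueNormalAt Q p₃ v₃ := ⟨hQc.isClosed.frontier_subset hp₃, hn₃, hu₃⟩
  rcases cross_mul_cross_neg_of_ne_zero h₁₂ h₁₃ h₂₃ with h | h | h
  · exact exists_separating_families_of_cross_mul_cross_neg hQc hconv hint h₁ h₂ h₃ h h₁₃ n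
  · exact exists_separating_families_of_cross_mul_cross_neg hQc hconv hint h₂ h₁ h₃ h h₂₃ n
  · exact exists_separating_families_of_cross_mul_cross_neg hQc hconv hint h₁ h₃ h₂ h h₁₂ n

theorem dual_lower_bound_general (Q : Set (ℝ × ℝ)) (hQ : IsRange Q)
    (hdir : HasThreeDirections Q) (k : ℕ) :
    ∃ S : Finset (Set (ℝ × ℝ)), (∀ R ∈ S, IsHomothet Q R) ∧
      ∀ m : ℕ, m < 4 * (k / 2) → ∀ f : Set (ℝ × ℝ) → Fin m,
        ∃ p : ℝ × ℝ,
          ((S.filter (fun R => p ∈ R)).image f).card <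
            min (S.filter (fun R => p ∈ R)).card k := by
  obtain ⟨hQc, hconv, hint, -⟩ := hQ
  obtain ⟨c, hch, hci, hsep⟩ := hdir.exists_separating_families hQc hconv hint (k / 2)
  obtain ⟨S, hSc, hcard, hS⟩ := hsep.exists_pairwiseShallow (by simp) hci
  refine ⟨S, fun R hR => ?_, fun m hm f => ?_⟩
  · obtain ⟨i, a, rfl⟩ := hSc R hR
    exact hch i a
  · rw [Fintype.card_fin] at hcard
    exact (hS.mono (Nat.mul_div_le k 2)).exists_card_image_lt (hcard ▸ hm) f

/-- `c̄_Q(k) ≥ 4⌊k/2⌋` for any range `Q` with three distinct directions: there is a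
finite family `S` of homothets of `Q` such that no coloring with fewer than
`4⌊k/2⌋` colors makes every point polychromatically covered. -/
theorem dual_lower_bound (Q : Set (ℝ × ℝ)) (hQ : IsRange Q)
    (hdir : HasThreeDirections Q) (k : ℕ) (hk : 2 ≤ k) :
    ∃ S : Finset (Set (ℝ × ℝ)), (∀ R ∈ S, IsHomothet Q R) ∧
      ∀ m : ℕ, m < 4 * (k / 2) → ∀ f : Set (ℝ × ℝ) → Fin m,
        ∃ p : ℝ × ℝ,
          ((S.filter (fun R => p ∈ R)).image f).card <
            min (S.filter (fun R => p ∈ R)).card k :=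
  dual_lower_bound_general Q hQ hdir k
end
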